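/- Let p be a prime number and let φ : A → S be a homomorphism of commutative rings such that A is Noetherian, both A and S are p-adically complete (complete and separated for the topology defined by powers of the ideal (p)), and p is a nonzerodivisor on both A and S. If for every integer k > 0 the ring S/p^kS is flat as a module over A/p^kA, then S is flat as an A-module. -/

import Mathlib

/-!
By the equational criterion, `S` is flat once every relation `∑ fᵢ xᵢ = 0` in `S` is trivial,
i.e. once `x` lies in the `S`-span `K S` of the syzygy module `K ⊆ Aˡ` of `f`. Flatness of
`S/qᵏ` over `A/qᵏ` writes `x` modulo `qᵏ` through syzygies of `f` modulo `qᵏ`, and Artin–Rees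
in the Noetherian ring `A` corrects those into genuine syzygies up to `qᵐ`, so
`x ∈ K S + qᵐ Sˡ` for every `m`. The same estimate for a matrix whose columns generate `K` shows
that `K S` satisfies an Artin–Rees condition inside `Sˡ`; in the `q`-adically complete module
`Sˡ` this makes `K S` closed, hence `x ∈ K S`.
-/

/-- The statement that `S/rS` is flat as a module over `R/rR`, where the module structure is
induced by the ring homomorphism `R/rR → S/rS` obtained from `φ : R → S`. -/
def QuotSpanFlat {R S : Type*} [CommRing R] [CommRing S] (φ : R →+* S) (r : R) : Prop :=
  letI : Algebra (R ⧸ Ideal.span {r}) (S ⧸ Ideal.span {φ r}) :=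
    (Ideal.quotientMap (Ideal.span {φ r}) φ (by
      rw [Ideal.span_singleton_le_iff_mem, Ideal.mem_comap]
      exact Ideal.mem_span_singleton_self _)).toAlgebra
  Module.Flat (R ⧸ Ideal.span {r}) (S ⧸ Ideal.span {φ r})

open Pointwise Matrix LinearMap

theorem Submodule.pow_smul_top_eq {R M : Type*} [CommRing R] [AddCommGroup M] [Module R M]
    (x : R) (n : ℕ) : (x ^ n • ⊤ : Submodule R M) = Ideal.span {x} ^ n • ⊤ := by
  rw [Ideal.span_singleton_pow, Submodule.ideal_span_singleton_smul]

theorem Submodule.pow_smul_top_le_of_le {R M : Type*} [CommRing R] [AddCommGroup M] [Module R M]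
    (x : R) {m n : ℕ} (h : m ≤ n) : (x ^ n • ⊤ : Submodule R M) ≤ x ^ m • ⊤ := by
  rw [pow_smul_top_eq, pow_smul_top_eq]
  exact pow_smul_top_le _ _ h

theorem Submodule.mem_smul_top_pi_iff_dvd {R ι : Type*} [CommRing R] (r : R) (v : ι → R) :
    v ∈ r • (⊤ : Submodule R (ι → R)) ↔ ∀ i, r ∣ v i := by
  rw [Submodule.mem_smul_pointwise_iff_exists]
  refine ⟨fun ⟨e, _, he⟩ i => ⟨e i, by rw [← he]; rfl⟩, fun h => ?_⟩
  choose e he using h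
  exact ⟨e, trivial, funext fun i => (he i).symm⟩

section AdicPi

variable {R M ι : Type*} [CommRing R] [AddCommGroup M] [Module R M] [Finite ι] {I : Ideal R}

theorem Submodule.mem_smul_top_pi_iff (v : ι → M) :
    v ∈ (I • ⊤ : Submodule R (ι → M)) ↔ ∀ i, v i ∈ (I • ⊤ : Submodule R M) := by
  classical
  have := Fintype.ofFinite ι
  refine ⟨fun hv i => smul_top_le_comap_smul_top I (LinearMap.proj i) hv, fun hv => ?_⟩
  rw [← Finset.univ_sum_single v]
  exact Submodule.sum_mem _ fun i _ =>
    smul_top_le_comap_smul_top I (LinearMap.single R (fun _ => M) i) (hv i)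

instance IsHausdorff.pi [IsHausdorff I M] : IsHausdorff I (ι → M) where
  haus' v hv := _root_.funext fun i => IsHausdorff.haus ‹_› (v i) fun n => by
    have hvn := hv n
    rw [SModEq.zero] at hvn ⊢
    exact (Submodule.mem_smul_top_pi_iff _).mp hvn i

instance IsPrecomplete.pi [IsPrecomplete I M] : IsPrecomplete I (ι → M) where
  prec' f hf := by
    choose L hL using fun i => IsPrecomplete.prec ‹_› (f := fun n => f n i) fun hmn => by
      have hfmn := hf hmn
      rw [SModEq.sub_mem] at hfmn ⊢
      exact (Submodule.mem_smul_top_pi_iff _).mp hfmn i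
    refine ⟨L, fun n => SModEq.sub_mem.mpr ((Submodule.mem_smul_top_pi_iff _).mpr fun i => ?_)⟩
    exact SModEq.sub_mem.mp (hL i n)

end AdicPi

theorem LinearMap.exists_comap_pow_smul_top_le_ker_sup {A M N : Type*} [CommRing A]
    [IsNoetherianRing A] [AddCommGroup M] [Module A M] [AddCommGroup N] [Module A N]
    [Module.Finite A N] (f : M →ₗ[A] N) (q : A) :
    ∃ c, ∀ m, (q ^ (m + c) • ⊤ : Submodule A N).comap f ≤ ker f ⊔ q ^ m • ⊤ := by
  obtain ⟨c, hc⟩ := Ideal.exists_pow_inf_eq_pow_smul (Ideal.span {q}) (range f)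
  refine ⟨c, fun m x hx => ?_⟩
  have hfx : f x ∈ (Ideal.span {q} ^ m • ⊤ : Submodule A M).map f := by
    rw [Submodule.map_smul'', Submodule.map_top]
    have hmem : f x ∈ (Ideal.span {q} ^ (m + c) • ⊤ : Submodule A N) ⊓ range f :=
      ⟨by rwa [← Submodule.pow_smul_top_eq], ⟨x, rfl⟩⟩
    rw [hc _ (Nat.le_add_left c m), Nat.add_sub_cancel] at hmem
    exact (smul_mono_right _ inf_le_right : _ ≤ Ideal.span {q} ^ m • range f) hmem
  obtain ⟨y, hy, hfy⟩ := hfx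
  rw [← Submodule.pow_smul_top_eq] at hy
  exact Submodule.mem_sup.mpr
    ⟨x - y, by rw [mem_ker, map_sub, hfy, sub_self], y, hy, sub_add_cancel x y⟩

theorem LinearMap.mem_range_of_forall_mem_range_sup_pow_smul_top {R P N : Type*} [CommRing R]
    [AddCommGroup P] [Module R P] [AddCommGroup N] [Module R N] {I : Ideal R}
    [IsPrecomplete I P] [IsHausdorff I N] (Φ : P →ₗ[R] N) {c : ℕ}
    (hΦ : ∀ m, range Φ ⊓ I ^ (m + c) • ⊤ ≤ (I ^ m • ⊤ : Submodule R P).map Φ) {w : N}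
    (hw : ∀ m, w ∈ range Φ ⊔ I ^ m • ⊤) : w ∈ range Φ := by
  have happrox : ∀ m, ∃ z, w - Φ z ∈ I ^ (m + c) • (⊤ : Submodule R N) := fun m => by
    obtain ⟨_, ⟨z, rfl⟩, e, he, hze⟩ := Submodule.mem_sup.mp (hw (m + c))
    exact ⟨z, by rwa [← hze, add_sub_cancel_left]⟩
  choose z hz using happrox
  -- `d m` has the same image as `z (m + 1) - z m` but is `Iᵐ`-small, so the partial sums converge.
  have hcorr : ∀ m, ∃ d ∈ (I ^ m • ⊤ : Submodule R P), Φ d = Φ (z (m + 1) - z m) := fun m => by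
    refine hΦ m ⟨⟨_, rfl⟩, ?_⟩
    rw [map_sub, ← sub_sub_sub_cancel_left _ _ w]
    exact sub_mem (hz m) (Submodule.pow_smul_top_le I N (by omega) (hz (m + 1)))
  choose d hd hΦd using hcorr
  set s : ℕ → P := fun n => z 0 + ∑ i ∈ Finset.range n, d i
  have hΦs : ∀ n, Φ (s n) = Φ (z n) := fun n => by
    induction n with
    | zero => simp [s]
    | succ n ih =>
      rw [show s (n + 1) = s n + d n by simp [s, Finset.sum_range_succ, add_assoc], map_add, ih,
        hΦd, map_sub, add_sub_cancel]
  obtain ⟨L, hL⟩ := IsPrecomplete.prec ‹_› (f := s) fun {m n} hmn => by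
    rw [SModEq.sub_mem, show s m - s n = -∑ i ∈ Finset.Ico m n, d i by
      simp [s, ← Finset.sum_range_add_sum_Ico _ hmn]]
    exact neg_mem (Submodule.sum_mem _ fun i hi =>
      Submodule.pow_smul_top_le I P (Finset.mem_Ico.mp hi).1 (hd i))
  refine ⟨L, (sub_eq_zero.mp (IsHausdorff.haus ‹_› _ fun n => ?_)).symm⟩
  rw [SModEq.zero, show w - Φ L = (w - Φ (z n)) + Φ (s n - L) by rw [map_sub, hΦs]; abel]
  exact add_mem (Submodule.pow_smul_top_le I N (by omega) (hz n))
    (Submodule.smul_top_le_comap_smul_top _ Φ (SModEq.sub_mem.mp (hL n)))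

theorem Module.Flat.exists_eq_sum_smul_of_sum_smul_eq_zero {R M κ ι : Type*} [CommRing R]
    [AddCommGroup M] [Module R M] [Module.Flat R M] [Fintype κ] [Fintype ι]
    (G : Matrix κ ι R) (w : ι → M) (hw : ∀ i, ∑ j, G i j • w j = 0) :
    ∃ (n : ℕ) (a : Fin n → ι → R) (y : Fin n → M),
      (∀ l, G *ᵥ a l = 0) ∧ ∀ j, w j = ∑ l, a l j • y l := by
  classical
  obtain ⟨n, a, y, hya, haG⟩ := exists_factorization_of_comp_eq_zero_of_free
    (f := Gᵀ.mulVecLin) (x := Fintype.linearCombination R w) (by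
      ext i
      simpa [Fintype.linearCombination_apply, Matrix.mulVec_single_one] using hw i)
  have ha : ∀ v : ι → R, a v = ∑ j, v j • a (Pi.single j 1) := fun v => by
    conv_lhs => rw [← Finset.univ_sum_single v]
    refine (map_sum a _ _).trans (Finset.sum_congr rfl fun j _ => ?_)
    rw [← map_smul, ← Pi.single_smul', smul_eq_mul, mul_one]
  refine ⟨n, fun l j => a (Pi.single j 1) l, fun l => y (Finsupp.single l 1), fun l => ?_,
    fun j => ?_⟩
  · ext i
    have := congr($haG (Pi.single i 1) l)
    rw [LinearMap.comp_apply, Matrix.mulVecLin_apply, Matrix.mulVec_single_one, ha] at this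
    simpa [Matrix.mulVec, dotProduct] using this
  · have := congr($hya (Pi.single j 1))
    rw [Fintype.linearCombination_apply_single, one_smul, LinearMap.comp_apply,
      ← Finsupp.univ_sum_single (a _), map_sum] at this
    refine this.trans (Finset.sum_congr rfl fun l _ => ?_)
    rw [← map_smul, Finsupp.smul_single_one]

section Extend

variable {A S ι : Type*} [CommRing A] [CommRing S] (φ : A →+* S)

/-- The image of `S ⊗[A] K → (ι → S)`. -/
def Submodule.extend (K : Submodule A (ι → A)) : Submodule S (ι → S) :=
  span S ((φ ∘ ·) '' K)

theorem RingHom.comp_smul (a : A) (v : ι → A) : φ ∘ (a • v) = φ a • (φ ∘ v) := by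
  ext; simp

theorem Submodule.extend_span (s : Set (ι → A)) :
    (span A s).extend φ = span S ((φ ∘ ·) '' s) := by
  refine le_antisymm (span_le.mpr ?_) (span_mono (Set.image_mono subset_span))
  rintro _ ⟨v, hv, rfl⟩
  induction hv using span_induction with
  | mem v hv => exact subset_span ⟨v, hv, rfl⟩
  | zero =>
    beta_reduce
    rw [show φ ∘ (0 : ι → A) = 0 by ext; simp]
    exact zero_mem _
  | add v v' _ _ h h' =>
    beta_reduce at *
    rw [show φ ∘ (v + v') = φ ∘ v + φ ∘ v' by ext; simp]
    exact add_mem h h'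
  | smul a v _ h =>
    beta_reduce at *
    rw [φ.comp_smul]
    exact smul_mem _ _ h

theorem Submodule.comp_mem_extend_sup_pow_smul_top {K : Submodule A (ι → A)} {q : A} {m : ℕ}
    {v : ι → A} (hv : v ∈ K ⊔ q ^ m • ⊤) : φ ∘ v ∈ K.extend φ ⊔ φ q ^ m • ⊤ := by
  obtain ⟨k, hk, _, he, rfl⟩ := mem_sup.mp hv
  obtain ⟨e, -, rfl⟩ := (mem_smul_pointwise_iff_exists _ _ _).mp he
  rw [show φ ∘ (k + q ^ m • e) = φ ∘ k + φ q ^ m • (φ ∘ e) by ext; simp]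
  exact add_mem (mem_sup_left (subset_span ⟨k, hk, rfl⟩))
    (mem_sup_right (smul_mem_pointwise_smul _ _ _ trivial))

theorem Submodule.exists_eq_sum_of_mem_extend {K : Submodule A (ι → A)} {w : ι → S}
    (hw : w ∈ K.extend φ) :
    ∃ (n : ℕ) (ζ : Fin n → ι → A) (y : Fin n → S), (∀ l, ζ l ∈ K) ∧ w = ∑ l, y l • (φ ∘ ζ l) := by
  obtain ⟨n, y, g, rfl⟩ := mem_span_set'.mp hw
  choose ζ hζ hφζ using fun l => (g l).2
  exact ⟨n, ζ, y, hζ, by simp only [hφζ]⟩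

variable [Fintype ι] {κ : Type*}

theorem Matrix.extend_ker_le_ker (F : Matrix κ ι A) :
    (ker F.mulVecLin).extend φ ≤ ker (F.map φ).mulVecLin := by
  refine Submodule.span_le.mpr ?_
  rintro _ ⟨v, hv, rfl⟩
  rw [SetLike.mem_coe, mem_ker, mulVecLin_apply] at hv ⊢
  ext i
  rw [← RingHom.map_mulVec, hv, Pi.zero_apply, map_zero, Pi.zero_apply]

theorem QuotSpanFlat.exists_sub_sum_smul_mem_smul_top [Fintype κ] {r : A} (hr : QuotSpanFlat φ r)
    (F : Matrix κ ι A) {w : ι → S} (hw : F.map φ *ᵥ w ∈ (φ r • ⊤ : Submodule S (κ → S))) :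
    ∃ (n : ℕ) (a : Fin n → ι → A) (y : Fin n → S), (∀ l, F *ᵥ a l ∈ (r • ⊤ : Submodule A (κ → A))) ∧
      w - ∑ l, y l • (φ ∘ a l) ∈ (φ r • ⊤ : Submodule S (ι → S)) := by
  let _ : Algebra (A ⧸ Ideal.span {r}) (S ⧸ Ideal.span {φ r}) :=
    (Ideal.quotientMap (Ideal.span {φ r}) φ (by
      rw [Ideal.span_singleton_le_iff_mem, Ideal.mem_comap]
      exact Ideal.mem_span_singleton_self _)).toAlgebra
  have : Module.Flat (A ⧸ Ideal.span {r}) (S ⧸ Ideal.span {φ r}) := hr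
  have hsmul : ∀ a s,
      Ideal.Quotient.mk (Ideal.span {r}) a • Ideal.Quotient.mk (Ideal.span {φ r}) s =
        Ideal.Quotient.mk _ (φ a * s) := fun a s => by
    rw [Algebra.smul_def, RingHom.algebraMap_toAlgebra, Ideal.quotientMap_mk, map_mul]
  rw [Submodule.mem_smul_top_pi_iff_dvd] at hw
  obtain ⟨n, a', y', ha', hwa'⟩ := Module.Flat.exists_eq_sum_smul_of_sum_smul_eq_zero
    (F.map (Ideal.Quotient.mk (Ideal.span {r}))) (Ideal.Quotient.mk (Ideal.span {φ r}) ∘ w)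
    fun i => by
      simp only [Matrix.map_apply, Function.comp_apply, hsmul, ← map_sum]
      exact (Ideal.Quotient.eq_zero_iff_dvd _ _).mpr (hw i)
  choose a ha using fun l j => Ideal.Quotient.mk_surjective (a' l j)
  choose y hy using fun l => Ideal.Quotient.mk_surjective (y' l)
  refine ⟨n, a, y, fun l => (Submodule.mem_smul_top_pi_iff_dvd _ _).mpr fun i => ?_,
    (Submodule.mem_smul_top_pi_iff_dvd _ _).mpr fun j => ?_⟩
  · rw [← Ideal.Quotient.eq_zero_iff_dvd, RingHom.map_mulVec,
      show Ideal.Quotient.mk _ ∘ a l = a' l from funext (ha l), ha' l, Pi.zero_apply]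
  · rw [← Ideal.Quotient.eq_zero_iff_dvd, Pi.sub_apply, map_sub,
      show Ideal.Quotient.mk _ (w j) = _ from hwa' j]
    simp only [← ha, ← hy, hsmul, Finset.sum_apply, Pi.smul_apply, Function.comp_apply, smul_eq_mul,
      map_sum, mul_comm, sub_self]

end Extend

section Syzygies

variable {A S ι κ : Type*} [CommRing A] [CommRing S] (φ : A →+* S) [Fintype ι]
  [IsNoetherianRing A] {q : A}

theorem Matrix.exists_comap_mulVecLin_pow_smul_top_le [Fintype κ]
    (hflat : ∀ k, 0 < k → QuotSpanFlat φ (q ^ k)) (F : Matrix κ ι A) :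
    ∃ c, ∀ m, (φ q ^ (m + c) • ⊤ : Submodule S (κ → S)).comap (F.map φ).mulVecLin ≤
      (ker F.mulVecLin).extend φ ⊔ φ q ^ m • ⊤ := by
  obtain ⟨c, hc⟩ := F.mulVecLin.exists_comap_pow_smul_top_le_ker_sup q
  refine ⟨c + 1, fun m w hw => ?_⟩
  obtain ⟨n, a, y, ha, hwa⟩ := (hflat (m + 1 + c) (by omega)).exists_sub_sum_smul_mem_smul_top φ F
    (by rwa [map_pow, show m + 1 + c = m + (c + 1) by omega])
  have hle : (ker F.mulVecLin).extend φ ⊔ φ q ^ (m + 1) • ⊤ ≤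
      (ker F.mulVecLin).extend φ ⊔ φ q ^ m • ⊤ :=
    sup_le_sup_left (Submodule.pow_smul_top_le_of_le _ m.le_succ) _
  have hsum : ∑ l, y l • (φ ∘ a l) ∈ (ker F.mulVecLin).extend φ ⊔ φ q ^ m • ⊤ :=
    Submodule.sum_mem _ fun l _ => Submodule.smul_mem _ _ <|
      hle (Submodule.comp_mem_extend_sup_pow_smul_top φ (hc (m + 1) (ha l)))
  rw [← sub_add_cancel w (∑ l, y l • (φ ∘ a l))]
  refine add_mem (Submodule.mem_sup_right ?_) hsum
  rw [map_pow] at hwa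
  exact Submodule.pow_smul_top_le_of_le _ (by omega) hwa

theorem Matrix.mem_extend_ker_of_forall_mem_sup [IsAdicComplete (Ideal.span {φ q}) S]
    (hflat : ∀ k, 0 < k → QuotSpanFlat φ (q ^ k)) (F : Matrix κ ι A) {w : ι → S}
    (hw : ∀ m, w ∈ (ker F.mulVecLin).extend φ ⊔ φ q ^ m • ⊤) : w ∈ (ker F.mulVecLin).extend φ := by
  obtain ⟨r, g, hg⟩ :=
    Submodule.fg_iff_exists_fin_generating_family.mp (IsNoetherian.noetherian (ker F.mulVecLin))
  let u : Matrix ι (Fin r) A := Matrix.of fun j l => g l j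
  have hK : (ker F.mulVecLin).extend φ = range (u.map φ).mulVecLin := by
    rw [← hg, Submodule.extend_span, Matrix.range_mulVecLin, ← Set.range_comp]
    rfl
  obtain ⟨c, hc⟩ := u.exists_comap_mulVecLin_pow_smul_top_le φ hflat
  rw [hK] at hw ⊢
  refine (u.map φ).mulVecLin.mem_range_of_forall_mem_range_sup_pow_smul_top (c := c)
    (fun m => ?_) fun m => by rw [← Submodule.pow_smul_top_eq]; exact hw m
  rintro _ ⟨⟨z, rfl⟩, hz⟩
  rw [← Submodule.pow_smul_top_eq] at hz ⊢
  obtain ⟨z₀, hz₀, e, he, rfl⟩ := Submodule.mem_sup.mp (hc m hz)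
  exact ⟨e, he, by rw [map_add, mem_ker.mp (u.extend_ker_le_ker φ hz₀), zero_add]⟩

end Syzygies

theorem Module.Flat.of_isAdicComplete_of_quotSpanFlat {A S : Type*} [CommRing A] [CommRing S]
    [Algebra A S] [IsNoetherianRing A] (q : A) [IsAdicComplete (Ideal.span {algebraMap A S q}) S]
    (hflat : ∀ k, 0 < k → QuotSpanFlat (algebraMap A S) (q ^ k)) : Module.Flat A S := by
  refine of_forall_isTrivialRelation fun {l f x} hfx => ?_
  let F : Matrix (Fin 1) (Fin l) A := Matrix.of fun _ => f
  obtain ⟨c, hc⟩ := F.exists_comap_mulVecLin_pow_smul_top_le (algebraMap A S) hflat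
  have hFx : F.map (algebraMap A S) *ᵥ x = 0 := by
    ext
    simpa [F, Matrix.mulVec, dotProduct, Algebra.smul_def] using hfx
  obtain ⟨n, ζ, y, hζ, rfl⟩ := Submodule.exists_eq_sum_of_mem_extend _
    (F.mem_extend_ker_of_forall_mem_sup _ hflat (w := x) fun m => hc m <| by
      rw [Submodule.mem_comap, mulVecLin_apply, hFx]
      exact zero_mem _)
  refine ⟨n, fun i l => ζ l i, y, fun i => ?_, fun l => ?_⟩
  · simp [Algebra.smul_def, mul_comm]
  · simpa [F, Matrix.mulVec, dotProduct] using congr_fun (hζ l) 0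

theorem flat_of_flat_mod_p_pow_general {A S : Type*} [CommRing A] [CommRing S] [IsNoetherianRing A]
    (p : ℕ) (φ : A →+* S)
    (hScomplete : IsAdicComplete (Ideal.span {(p : S)}) S)
    (hflat : ∀ k : ℕ, 0 < k → QuotSpanFlat φ ((p : A) ^ k)) :
    letI : Algebra A S := φ.toAlgebra
    Module.Flat A S := by
  let _ : Algebra A S := φ.toAlgebra
  have : IsAdicComplete (Ideal.span {algebraMap A S p}) S := by rwa [map_natCast]
  exact Module.Flat.of_isAdicComplete_of_quotSpanFlat (p : A) hflat

/-- Let `p` be a prime and `φ : A → S` a ring homomorphism, with `A` Noetherian, both `A` and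
`S` `p`-adically complete, and `p` a nonzerodivisor on both `A` and `S`. If `S/p^kS` is flat
over `A/p^kA` for all `k > 0`, then `S` is flat over `A`. -/
theorem flat_of_flat_mod_p_pow {A S : Type*} [CommRing A] [CommRing S] [IsNoetherianRing A]
    (p : ℕ) (hp : p.Prime) (φ : A →+* S)
    (hAcomplete : IsAdicComplete (Ideal.span {(p : A)}) A)
    (hScomplete : IsAdicComplete (Ideal.span {(p : S)}) S)
    (hAnzd : (p : A) ∈ nonZeroDivisors A)
    (hSnzd : (p : S) ∈ nonZeroDivisors S)
    (hflat : ∀ k : ℕ, 0 < k → QuotSpanFlat φ ((p : A) ^ k)) :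
    letI : Algebra A S := φ.toAlgebra
    Module.Flat A S :=
  flat_of_flat_mod_p_pow_general p φ hScomplete hflat
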